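/- Assume β > 0 and that m < m' < m'' are natural numbers with m' > 2^m and m'' > 2^{m'}. Let w be a set of functions d̄ = ⟨d_ℓ : m' ≤ ℓ < m''⟩ such that each d_ℓ belongs to { j/2^{m''} : 0 ≤ j ≤ 2^{m''−m} }, such that every d̄ ∈ w satisfies ∑_{ℓ∈[m',m'')} d_ℓ ≥ 1/β, and such that |w| ≤ 2^{m−2}/(36β). Then there exists a partition (u_0, u_1) of the interval [m', m'') such that for every d̄ ∈ w and every h ∈ {0,1}: 1/3 ≤ (∑_{ℓ∈u_h} d_ℓ) / (∑_{ℓ∈[m',m'')} d_ℓ) ≤ 2/3. -/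

import Mathlib

/-!
For a nonnegative weight `d` on a finite set `I` of size `n`, the identity
`∑_{u ⊆ I} (2 d(u) - d(I))² = 2ⁿ ∑_ℓ d_ℓ²` says that a uniformly random `u` has
`E (2 d(u) - d(I))² = ∑ d_ℓ² ≤ 2^{-m} d(I)` when every `d_ℓ ≤ 2^{-m}`. A split is
unbalanced exactly when `|2 d(u) - d(I)| > d(I)/3`, so by Chebyshev at most
`9 · 2ⁿ 2^{-m} / d(I) ≤ 9 · 2ⁿ 2^{-m} β` subsets are unbalanced for `d`. Summed over the at
most `2^m / (144 β)` weights of `w` this is at most `2ⁿ / 16`, so some `u` is balanced for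
every `d ∈ w`, and then so is its complement.
-/

open Finset

theorem Finset.sum_powerset_sq_two_mul_sum_sub {α R : Type*} [DecidableEq α] [CommRing R]
    (f : α → R) (I : Finset α) :
    ∑ u ∈ I.powerset, (2 * ∑ i ∈ u, f i - ∑ i ∈ I, f i) ^ 2 = 2 ^ #I * ∑ i ∈ I, f i ^ 2 := by
  induction I using Finset.induction_on with
  | empty => simp
  | @insert a I ha ih =>
    have hsplit : ∀ u ∈ I.powerset,
        (2 * ∑ i ∈ u, f i - ∑ i ∈ insert a I, f i) ^ 2
          + (2 * ∑ i ∈ insert a u, f i - ∑ i ∈ insert a I, f i) ^ 2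
          = 2 * (2 * ∑ i ∈ u, f i - ∑ i ∈ I, f i) ^ 2 + 2 * f a ^ 2 := by
      intro u hu
      have hau : a ∉ u := fun h => ha (mem_powerset.1 hu h)
      rw [sum_insert ha, sum_insert hau]
      ring
    rw [sum_powerset_insert ha, ← sum_add_distrib, sum_congr rfl hsplit, sum_add_distrib,
      ← mul_sum, ih, sum_const, card_powerset, nsmul_eq_mul, card_insert_of_notMem ha,
      sum_insert ha]
    push_cast
    ring

section BalancedSplit

variable {ι : Type*} [Fintype ι]

def IsBalancedSplit (d : ι → ℝ) (u : Finset ι) : Prop :=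
  1 / 3 ≤ (∑ i ∈ u, d i) / ∑ i, d i ∧ (∑ i ∈ u, d i) / ∑ i, d i ≤ 2 / 3

noncomputable instance (d : ι → ℝ) : DecidablePred (IsBalancedSplit d) := fun _ => by
  unfold IsBalancedSplit; infer_instance

theorem IsBalancedSplit.compl [DecidableEq ι] {d : ι → ℝ} {u : Finset ι} (hd : ∑ i, d i ≠ 0)
    (h : IsBalancedSplit d u) : IsBalancedSplit d uᶜ := by
  have hcompl : (∑ i ∈ uᶜ, d i) / ∑ i, d i = 1 - (∑ i ∈ u, d i) / ∑ i, d i := by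
    rw [eq_sub_iff_add_eq, ← add_div, sum_compl_add_sum, div_self hd]
  obtain ⟨h₁, h₂⟩ := h
  exact ⟨by linarith, by linarith⟩

theorem sq_sum_le_of_not_isBalancedSplit {d : ι → ℝ} {u : Finset ι} (hd : 0 < ∑ i, d i)
    (h : ¬ IsBalancedSplit d u) :
    (∑ i, d i) ^ 2 ≤ 9 * (2 * ∑ i ∈ u, d i - ∑ i, d i) ^ 2 := by
  simp only [IsBalancedSplit, not_and_or, not_le, div_lt_iff₀ hd, lt_div_iff₀ hd] at h
  rcases h with h | h <;> nlinarith

theorem card_not_isBalancedSplit_mul_sum_le [DecidableEq ι] {d : ι → ℝ} {ε : ℝ}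
    (hd₀ : ∀ i, 0 ≤ d i) (hdε : ∀ i, d i ≤ ε) (hd : 0 < ∑ i, d i) :
    #{u | ¬ IsBalancedSplit d u} * ∑ i, d i ≤ 9 * 2 ^ Fintype.card ι * ε := by
  have hsq : ∑ i, d i ^ 2 ≤ ε * ∑ i, d i := by
    rw [mul_sum]
    exact sum_le_sum fun i _ => by nlinarith [hd₀ i, hdε i]
  have hcount : (#{u | ¬ IsBalancedSplit d u} : ℝ) * (∑ i, d i) ^ 2
      ≤ 9 * 2 ^ Fintype.card ι * ∑ i, d i ^ 2 := by
    calc (#{u | ¬ IsBalancedSplit d u} : ℝ) * (∑ i, d i) ^ 2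
        = ∑ u with ¬ IsBalancedSplit d u, (∑ i, d i) ^ 2 := by
          rw [sum_const, nsmul_eq_mul]
      _ ≤ ∑ u with ¬ IsBalancedSplit d u, 9 * (2 * ∑ i ∈ u, d i - ∑ i, d i) ^ 2 :=
          sum_le_sum fun u hu => sq_sum_le_of_not_isBalancedSplit hd (mem_filter.1 hu).2
      _ ≤ ∑ u, 9 * (2 * ∑ i ∈ u, d i - ∑ i, d i) ^ 2 :=
          sum_le_sum_of_subset_of_nonneg (filter_subset _ _) fun _ _ _ => by positivity
      _ = 9 * 2 ^ Fintype.card ι * ∑ i, d i ^ 2 := by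
          rw [← mul_sum, ← powerset_univ, sum_powerset_sq_two_mul_sum_sub, card_univ, mul_assoc]
  have hmul : (#{u | ¬ IsBalancedSplit d u} * ∑ i, d i) * ∑ i, d i
      ≤ (9 * 2 ^ Fintype.card ι * ε) * ∑ i, d i := by
    calc _ = (#{u | ¬ IsBalancedSplit d u} : ℝ) * (∑ i, d i) ^ 2 := by ring
      _ ≤ 9 * 2 ^ Fintype.card ι * (ε * ∑ i, d i) := hcount.trans (by gcongr)
      _ = _ := by ring
  exact le_of_mul_le_mul_right hmul hd

theorem exists_forall_isBalancedSplit [DecidableEq ι] (W : Finset (ι → ℝ)) {ε s : ℝ}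
    (hd₀ : ∀ d ∈ W, ∀ i, 0 ≤ d i) (hdε : ∀ d ∈ W, ∀ i, d i ≤ ε) (hs : 0 < s)
    (hsum : ∀ d ∈ W, s ≤ ∑ i, d i) (hW : 9 * #W * ε < s) :
    ∃ u : Finset ι, ∀ d ∈ W, IsBalancedSplit d u := by
  by_contra! hbad
  have hcover : (univ : Finset (Finset ι)) ⊆ W.biUnion fun d => {u | ¬ IsBalancedSplit d u} := by
    intro u _
    obtain ⟨d, hdW, hdu⟩ := hbad u
    exact mem_biUnion.2 ⟨d, hdW, mem_filter.2 ⟨mem_univ u, hdu⟩⟩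
  have hcard : (2 : ℝ) ^ Fintype.card ι ≤ ∑ d ∈ W, (#{u | ¬ IsBalancedSplit d u} : ℝ) := by
    have := (card_le_card hcover).trans card_biUnion_le
    rw [card_univ, Fintype.card_finset] at this
    exact_mod_cast this
  have htotal : (2 : ℝ) ^ Fintype.card ι * s ≤ #W * (9 * 2 ^ Fintype.card ι * ε) := by
    calc (2 : ℝ) ^ Fintype.card ι * s ≤ ∑ d ∈ W, #{u | ¬ IsBalancedSplit d u} * s :=
          by rw [← sum_mul]; exact mul_le_mul_of_nonneg_right hcard hs.le
      _ ≤ ∑ d ∈ W, #{u | ¬ IsBalancedSplit d u} * ∑ i, d i :=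
          sum_le_sum fun d hd => mul_le_mul_of_nonneg_left (hsum d hd) (by positivity)
      _ ≤ ∑ d ∈ W, 9 * 2 ^ Fintype.card ι * ε :=
          sum_le_sum fun d hd => card_not_isBalancedSplit_mul_sum_le (hd₀ d hd) (hdε d hd)
            (hs.trans_le (hsum d hd))
      _ = #W * (9 * 2 ^ Fintype.card ι * ε) := by rw [sum_const, nsmul_eq_mul]
  nlinarith [pow_pos (two_pos : (0 : ℝ) < 2) (Fintype.card ι)]

end BalancedSplit

theorem Finset.sum_ite_coe_mem_map_subtype {α : Type*} [DecidableEq α] {p : α → Prop}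
    [Fintype (Subtype p)] (v : Finset (Subtype p)) (d : Subtype p → ℝ) :
    (∑ ℓ : Subtype p, if (ℓ : α) ∈ v.map (Function.Embedding.subtype p) then d ℓ else 0)
      = ∑ ℓ ∈ v, d ℓ := by
  simp only [mem_map, Function.Embedding.coe_subtype, Subtype.val_inj, exists_eq_right]
  rw [sum_ite_mem, univ_inter]

theorem Nat.cast_div_two_pow_le_inv_two_pow {j m n : ℕ} (hmn : m ≤ n) (hj : j ≤ 2 ^ (n - m)) :
    (j : ℝ) / 2 ^ n ≤ (2 ^ m)⁻¹ := by
  rw [div_le_iff₀ (by positivity), ← div_eq_inv_mul, le_div_iff₀ (by positivity),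
    ← pow_sub_mul_pow 2 hmn]
  gcongr
  exact_mod_cast hj

theorem exists_balanced_partition (β : ℝ) (hβ : 0 < β) (m m' m'' : ℕ)
    (hmm' : m < m') (hm'm'' : m' < m'')
    (w : Set ((Set.Ico m' m'') → ℝ))
    (hval : ∀ d ∈ w, ∀ ℓ : Set.Ico m' m'',
      ∃ j : ℕ, j ≤ 2 ^ (m'' - m) ∧ d ℓ = (j : ℝ) / 2 ^ m'')
    (hsum : ∀ d ∈ w, 1 / β ≤ ∑ ℓ : Set.Ico m' m'', d ℓ)
    (hcard : (Nat.card w : ℝ) ≤ (2 : ℝ) ^ ((m : ℤ) - 2) / (36 * β)) :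
    ∃ u₀ u₁ : Finset ℕ, u₀ ∪ u₁ = Finset.Ico m' m'' ∧ u₀ ∩ u₁ = ∅ ∧
      ∀ d ∈ w, ∀ u ∈ ({u₀, u₁} : Set (Finset ℕ)),
        1 / 3 ≤ (∑ ℓ : Set.Ico m' m'', if (ℓ : ℕ) ∈ u then d ℓ else 0) /
            (∑ ℓ : Set.Ico m' m'', d ℓ) ∧
        (∑ ℓ : Set.Ico m' m'', if (ℓ : ℕ) ∈ u then d ℓ else 0) /
            (∑ ℓ : Set.Ico m' m'', d ℓ) ≤ 2 / 3 := by
  have hbound : ∀ d ∈ w, ∀ ℓ, 0 ≤ d ℓ ∧ d ℓ ≤ (2 ^ m)⁻¹ := fun d hd ℓ => by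
    obtain ⟨j, hj, hdj⟩ := hval d hd ℓ
    rw [hdj]
    exact ⟨by positivity, Nat.cast_div_two_pow_le_inv_two_pow (hmm'.trans hm'm'').le hj⟩
  have hw : w.Finite := (Set.Finite.pi' fun _ => (Set.finite_Iic (2 ^ (m'' - m))).image
    fun j : ℕ => (j : ℝ) / 2 ^ m'').subset fun d hd ℓ => by
      obtain ⟨j, hj, hdj⟩ := hval d hd ℓ
      exact ⟨j, hj, hdj.symm⟩
  have hW : 9 * #hw.toFinset * (2 ^ m)⁻¹ < 1 / β := by
    rw [← Nat.card_eq_card_finite_toFinset hw]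
    rw [zpow_sub₀ two_ne_zero, zpow_natCast] at hcard
    calc 9 * (Nat.card w : ℝ) * (2 ^ m)⁻¹ ≤ 9 * (2 ^ m / 2 ^ 2 / (36 * β)) * (2 ^ m)⁻¹ := by
          gcongr
          exact hcard
      _ = 1 / (16 * β) := by field_simp; norm_num
      _ < 1 / β := by gcongr; linarith
  obtain ⟨v, hv⟩ := exists_forall_isBalancedSplit hw.toFinset
    (fun d hd ℓ => (hbound d (hw.mem_toFinset.1 hd) ℓ).1)
    (fun d hd ℓ => (hbound d (hw.mem_toFinset.1 hd) ℓ).2) (by positivity)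
    (fun d hd => hsum d (hw.mem_toFinset.1 hd)) hW
  refine ⟨v.map (.subtype _), vᶜ.map (.subtype _), ?_, ?_, ?_⟩
  · rw [← map_union, union_compl]
    ext
    simp
  · rw [← disjoint_iff_inter_eq_empty, disjoint_map]
    exact disjoint_compl_right
  rintro d hd u (rfl | rfl) <;> rw [sum_ite_coe_mem_map_subtype]
  · exact hv d (hw.mem_toFinset.2 hd)
  · exact (hv d (hw.mem_toFinset.2 hd)).compl (by linarith [hsum d hd, one_div_pos.2 hβ])
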